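/- arXiv:1811.09266 — 2 statements merged into one kernel-verified Lean document; each statement's English description precedes it below -/
import Mathlib

section
/- Let 0 < δ < 1 and λ > 0, and let C(t;δ,λ) = (1 + t^δ)^{−λ/δ} be the Generalized Cauchy function. Fix 0 < β₁ < β₂ and ε > 0, and let K_{ε;β₂,β₁}[C](t) = (β₂^ε C(t/β₂;δ,λ) − β₁^ε C(t/β₁;δ,λ))/(β₂^ε − β₁^ε) for t ≥ 0. If ε ≥ δ, then K_{ε;β₂,β₁}[C] belongs to Φ_∞ (i.e., to Φ_d for every positive integer d). -/
open MeasureTheory Real Filter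

noncomputable section

/-- Membership in the class `Φ_d`: continuous on `[0,∞)`, value `1` at `0`, and
`x ↦ φ(‖x‖)` positive definite on `ℝ^d`. -/
def MemPhi (d : ℕ) (φ : ℝ → ℝ) : Prop :=
  ContinuousOn φ (Set.Ici 0) ∧ φ 0 = 1 ∧
    ∀ (N : ℕ) (x : Fin N → EuclideanSpace ℝ (Fin d)) (a : Fin N → ℝ),
      0 ≤ ∑ k : Fin N, ∑ h : Fin N, a k * a h * φ ‖x k - x h‖

/-- The Zastavnyi operator `K_{ε;β₂,β₁}[φ]`. -/
def zastavnyi (ε β₁ β₂ : ℝ) (φ : ℝ → ℝ) (t : ℝ) : ℝ :=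
  (β₂ ^ ε * φ (t / β₂) - β₁ ^ ε * φ (t / β₁)) / (β₂ ^ ε - β₁ ^ ε)

/-- The modified Bessel function of the second kind of order `ν`. -/
def besselK (ν t : ℝ) : ℝ :=
  ∫ u in Set.Ioi (0 : ℝ), Real.exp (-t * Real.cosh u) * Real.cosh (ν * u)

/-- The Matérn function with smoothness parameter `ν`. -/
def matern (ν t : ℝ) : ℝ :=
  if t = 0 then 1 else 2 ^ (1 - ν) / Real.Gamma ν * t ^ ν * besselK ν t

/-- The Generalized Cauchy function. -/
def genCauchy (δ lam t : ℝ) : ℝ := (1 + t ^ δ) ^ (-(lam / δ))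

/-- The Generalized Wendland function. -/
def genWendland (κ μ t : ℝ) : ℝ :=
  if 1 ≤ t then 0
  else if κ = 0 then (1 - t) ^ μ
  else (∫ u in Set.Ioc t 1, u * (u ^ 2 - t ^ 2) ^ (κ - 1) * (1 - u) ^ μ) /
    (Real.Gamma (2 * κ) * Real.Gamma (μ + 1) / Real.Gamma (2 * κ + μ + 1))

/-- The `d`-dimensional radial Fourier transform of a radial function `x ↦ φ(‖x‖)`,
evaluated at a frequency of norm `z` (taken in the direction of the first coordinate;
the imaginary part vanishes by radial symmetry). -/
def radialFT (d : ℕ) [NeZero d] (φ : ℝ → ℝ) (z : ℝ) : ℝ :=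
  (2 * Real.pi) ^ (-(d : ℝ)) *
    ∫ x : EuclideanSpace ℝ (Fin d), Real.cos (z * x 0) * φ ‖x‖

/-!
Differentiating in the scale, `b ↦ b ^ ε * C (t / b)` has derivative `b ^ (ε - 1) * ψ (t / b)`
with `ψ = ε C - r C'`, so `K_{ε;β₂,β₁}[C]` is a positive average of the rescalings `ψ (· / b)`,
`b ∈ [β₁, β₂]`, and it suffices that `ψ` is positive definite on every real inner product space.
A Gamma integral writes `ψ r` as a positive mixture over `s > 0` of
`(ε - δ) e^{-s r^δ} + δ (1 + s r^δ) e^{-s r^δ}`. The first kernel is positive definite by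
Schoenberg's theorem, since `r^δ = (r²)^{δ/2}` is conditionally negative definite: in the integral
representation of `x ↦ x ^ p` (`0 < p < 1`) through `(t + x)⁻¹`, the kernels `(t + r²)⁻¹` are
Gamma mixtures of Gaussians. The second kernel is
`∫₀^∞ s² (δ/2) (u + r²)^{δ-1} e^{-s (u + r²)^{δ/2}} du`, a mixture of products of positive definite
kernels (here `δ < 1` is needed), hence positive definite by the Schur product theorem.
-/

open Set

namespace Matrix

variable {ι : Type*} [Fintype ι] {A : Matrix ι ι ℝ}

theorem sum_mul_mul_eq_dotProduct_mulVec (a : ι → ℝ) :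
    ∑ i, ∑ j, a i * a j * A i j = a ⬝ᵥ A *ᵥ a := by
  simp only [dotProduct, mulVec, Finset.mul_sum]
  simp only [mul_comm, mul_left_comm]

theorem posSemidef_iff_sum_mul_mul :
    A.PosSemidef ↔ A.IsHermitian ∧ ∀ a : ι → ℝ, 0 ≤ ∑ i, ∑ j, a i * a j * A i j := by
  simp [posSemidef_iff_dotProduct_mulVec, sum_mul_mul_eq_dotProduct_mulVec]

theorem PosSemidef.map_pow (hA : A.PosSemidef) (n : ℕ) : (A.map (· ^ n)).PosSemidef := by
  induction n with
  | zero => simpa [vecMulVec, Matrix.map] using posSemidef_vecMulVec_self_star (1 : ι → ℝ)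
  | succ n ih =>
    have hsucc : A.map (· ^ (n + 1)) = A.map (· ^ n) ⊙ A := by
      ext i j
      simp [pow_succ]
    exact hsucc ▸ ih.hadamard hA

theorem PosSemidef.map_exp (hA : A.PosSemidef) : (A.map exp).PosSemidef := by
  refine posSemidef_iff_sum_mul_mul.2 ⟨?_, fun a => ?_⟩
  · ext i j
    simpa using congrArg exp (hA.isHermitian.apply i j)
  have hsum : HasSum (fun n : ℕ => (n.factorial : ℝ)⁻¹ * ∑ i, ∑ j, a i * a j * A i j ^ n)
      (∑ i, ∑ j, a i * a j * exp (A i j)) := by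
    simp only [Finset.mul_sum]
    refine hasSum_sum fun i _ => hasSum_sum fun j _ => ?_
    have h := (NormedSpace.exp_series_hasSum_exp' (𝕂 := ℝ) (A i j)).mul_left (a i * a j)
    rw [← Real.exp_eq_exp_ℝ] at h
    simpa only [smul_eq_mul, mul_left_comm] using h
  exact hsum.nonneg fun n => mul_nonneg (by positivity)
    ((posSemidef_iff_sum_mul_mul.1 (hA.map_pow n)).2 a)

theorem posSemidef_map_exp_neg (hA : A.IsSymm)
    (hneg : ∀ a : ι → ℝ, ∑ i, a i = 0 → ∑ i, ∑ j, a i * a j * A i j ≤ 0) :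
    (A.map fun t => exp (-t)).PosSemidef := by
  classical
  rcases isEmpty_or_nonempty ι with hι | ⟨⟨i₀⟩⟩
  · exact posSemidef_iff_sum_mul_mul.2 ⟨Subsingleton.elim _ _, fun a => by simp⟩
  -- `Pᵀ` maps every vector to one of zero sum, so `-(P * A * Pᵀ)` is positive semidefinite
  set P : Matrix ι ι ℝ := 1 - vecMulVec 1 (Pi.single i₀ 1) with hP
  have hPA : ∀ i j, (P * A * Pᵀ) i j = A i j - A j i₀ - A i i₀ + A i₀ i₀ := fun i j => by
    simp [hP, sub_mul, mul_sub, mul_apply, one_apply, Pi.single_apply, hA.apply j i₀]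
    ring
  have hsum : ∀ a, ∑ i, (Pᵀ *ᵥ a) i = 0 := fun a => by
    simp [hP, mulVec, dotProduct, Pi.single_apply, one_apply, sub_mul, Finset.sum_sub_distrib,
      ite_mul]
  have hB : (-(P * A * Pᵀ)).PosSemidef := by
    refine posSemidef_iff_dotProduct_mulVec.2 ⟨?_, fun a => ?_⟩
    · exact (isHermitian_mul_mul_conjTranspose P hA).neg
    · have key : star a ⬝ᵥ (-(P * A * Pᵀ)) *ᵥ a = -((Pᵀ *ᵥ a) ⬝ᵥ A *ᵥ (Pᵀ *ᵥ a)) := by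
        simp [neg_mulVec, ← mulVec_mulVec, dotProduct_mulVec, mulVec_transpose]
      rw [key, ← sum_mul_mul_eq_dotProduct_mulVec]
      linarith [hneg _ (hsum a)]
  set d : ι → ℝ := fun i => exp (-A i i₀)
  have hmap : A.map (fun t => exp (-t)) =
      exp (A i₀ i₀) • (vecMulVec d d ⊙ (-(P * A * Pᵀ)).map exp) := by
    ext i j
    simp only [map_apply, smul_apply, hadamard_apply, vecMulVec_apply, neg_apply, hPA, d,
      smul_eq_mul, ← exp_add]
    ring_nf
  rw [hmap]
  exact ((posSemidef_vecMulVec_self_star d).hadamard hB.map_exp).smul (exp_pos _).le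

end Matrix

section Radial

variable (F : Type*) [SeminormedAddCommGroup F]

/-- For `F = ℝ^d` this is the last clause of `MemPhi`. -/
def RadialPosDef (φ : ℝ → ℝ) : Prop :=
  ∀ (n : ℕ) (x : Fin n → F) (a : Fin n → ℝ), 0 ≤ ∑ i, ∑ j, a i * a j * φ ‖x i - x j‖

def RadialCondNegDef (ψ : ℝ → ℝ) : Prop :=
  ∀ (n : ℕ) (x : Fin n → F) (a : Fin n → ℝ),
    ∑ i, a i = 0 → ∑ i, ∑ j, a i * a j * ψ ‖x i - x j‖ ≤ 0

variable {F} {φ ψ : ℝ → ℝ}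

theorem isSymm_of_norm_sub {n : ℕ} (x : Fin n → F) (φ : ℝ → ℝ) :
    (Matrix.of fun i j => φ ‖x i - x j‖).IsSymm :=
  Matrix.IsSymm.ext fun i j => by simp [norm_sub_rev]

theorem radialPosDef_iff :
    RadialPosDef F φ ↔
      ∀ (n : ℕ) (x : Fin n → F), (Matrix.of fun i j => φ ‖x i - x j‖).PosSemidef := by
  simp only [Matrix.posSemidef_iff_sum_mul_mul, Matrix.of_apply]
  exact ⟨fun h n x => ⟨isSymm_of_norm_sub x φ, h n x⟩, fun h n x => (h n x).2⟩

namespace RadialPosDef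

theorem congr (hφ : RadialPosDef F φ) (h : ∀ r, 0 ≤ r → φ r = ψ r) : RadialPosDef F ψ := by
  intro n x a
  simpa only [h _ (norm_nonneg _)] using hφ n x a

theorem add (hφ : RadialPosDef F φ) (hψ : RadialPosDef F ψ) :
    RadialPosDef F fun r => φ r + ψ r := by
  intro n x a
  simpa only [mul_add, Finset.sum_add_distrib] using add_nonneg (hφ n x a) (hψ n x a)

theorem const_mul (hφ : RadialPosDef F φ) {c : ℝ} (hc : 0 ≤ c) :
    RadialPosDef F fun r => c * φ r := by
  intro n x a
  simpa only [mul_left_comm _ c, ← Finset.mul_sum] using mul_nonneg hc (hφ n x a)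

theorem mul (hφ : RadialPosDef F φ) (hψ : RadialPosDef F ψ) : RadialPosDef F fun r => φ r * ψ r :=
  radialPosDef_iff.2 fun n x => (radialPosDef_iff.1 hφ n x).hadamard (radialPosDef_iff.1 hψ n x)

theorem comp_mul_left [NormedSpace ℝ F] (hφ : RadialPosDef F φ) {c : ℝ} (hc : 0 ≤ c) :
    RadialPosDef F fun r => φ (c * r) := by
  intro n x a
  simpa only [Pi.smul_apply, ← smul_sub, norm_smul, Real.norm_of_nonneg hc] using hφ n (c • x) a

theorem radialCondNegDef_const_sub (hφ : RadialPosDef F φ) (c : ℝ) :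
    RadialCondNegDef F fun r => c - φ r := by
  intro n x a ha
  have hc : ∑ i, ∑ j, a i * a j * c = 0 := by
    simp [← Finset.sum_mul, ← Finset.mul_sum, ha]
  simpa only [mul_sub, Finset.sum_sub_distrib, hc, zero_sub, neg_nonpos] using hφ n x a

end RadialPosDef

namespace RadialCondNegDef

theorem congr (hψ : RadialCondNegDef F ψ) (h : ∀ r, 0 ≤ r → ψ r = φ r) :
    RadialCondNegDef F φ := by
  intro n x a ha
  simpa only [h _ (norm_nonneg _)] using hψ n x a ha

theorem const_mul (hψ : RadialCondNegDef F ψ) {c : ℝ} (hc : 0 ≤ c) :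
    RadialCondNegDef F fun r => c * ψ r := by
  intro n x a ha
  simpa only [mul_left_comm _ c, ← Finset.mul_sum] using
    mul_nonpos_of_nonneg_of_nonpos hc (hψ n x a ha)

theorem exp_neg (hψ : RadialCondNegDef F ψ) : RadialPosDef F fun r => exp (-ψ r) :=
  radialPosDef_iff.2 fun n x => Matrix.posSemidef_map_exp_neg (isSymm_of_norm_sub x ψ) (hψ n x)

end RadialCondNegDef

section Integral

variable {α : Type*} [MeasurableSpace α] {μ : Measure α} {ι : Type*} [Fintype ι]

theorem integral_sum_sum_mul (a : ι → ℝ) {f : α → ι → ι → ℝ}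
    (hf : ∀ i j, Integrable (fun s => f s i j) μ) :
    ∫ s, ∑ i, ∑ j, a i * a j * f s i j ∂μ = ∑ i, ∑ j, a i * a j * ∫ s, f s i j ∂μ := by
  rw [integral_finsetSum _ fun i _ => integrable_finsetSum _ fun j _ => (hf i j).const_mul _]
  refine Finset.sum_congr rfl fun i _ => ?_
  rw [integral_finsetSum _ fun j _ => (hf i j).const_mul _]
  simp only [integral_const_mul]

variable {f : α → ℝ → ℝ}

theorem RadialPosDef.integral (hf : ∀ᵐ s ∂μ, RadialPosDef F (f s))
    (hint : ∀ r, 0 ≤ r → Integrable (fun s => f s r) μ) :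
    RadialPosDef F fun r => ∫ s, f s r ∂μ := by
  intro n x a
  rw [← integral_sum_sum_mul a fun i j => hint _ (norm_nonneg _)]
  exact integral_nonneg_of_ae (hf.mono fun s hs => hs n x a)

theorem RadialCondNegDef.integral (hf : ∀ᵐ s ∂μ, RadialCondNegDef F (f s))
    (hint : ∀ r, 0 ≤ r → Integrable (fun s => f s r) μ) :
    RadialCondNegDef F fun r => ∫ s, f s r ∂μ := by
  intro n x a ha
  rw [← integral_sum_sum_mul a fun i j => hint _ (norm_nonneg _)]
  exact integral_nonpos_of_ae (hf.mono fun s hs => hs n x a ha)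

end Integral

end Radial

theorem integrableOn_rpow_sub_one_mul_exp_neg_mul {a c : ℝ} (ha : 0 < a) (hc : 0 < c) :
    IntegrableOn (fun t => t ^ (a - 1) * exp (-(c * t))) (Ioi 0) :=
  .of_integral_ne_zero (by rw [integral_rpow_mul_exp_neg_mul_Ioi ha hc]; positivity)

theorem rpow_neg_eq_integral {a c : ℝ} (ha : 0 < a) (hc : 0 < c) :
    c ^ (-a) = (Gamma a)⁻¹ * ∫ t in Ioi 0, t ^ (a - 1) * exp (-(c * t)) := by
  rw [integral_rpow_mul_exp_neg_mul_Ioi ha hc, one_div, inv_rpow hc.le, rpow_neg hc.le]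
  field_simp [(Gamma_pos_of_pos ha).ne']

open scoped Topology in
theorem integral_rpow_mul_exp_neg_mul_rpow_add {γ s m : ℝ} (hγ : 0 < γ) (hs : 0 < s)
    (hm : 0 ≤ m) :
    ∫ u in Ioi 0, s * s * γ * (u + m) ^ (2 * γ - 1) * exp (-(s * (u + m) ^ γ)) =
      (1 + s * m ^ γ) * exp (-(s * m ^ γ)) := by
  set P : ℝ → ℝ := fun u => s * (u + m) ^ γ
  have hderiv : ∀ u ∈ Ioi (0 : ℝ), HasDerivAt (fun u => -((1 + P u) * exp (-P u)))
      (s * s * γ * (u + m) ^ (2 * γ - 1) * exp (-P u)) u := by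
    intro u (hu : 0 < u)
    have hum : 0 < u + m := by linarith
    have hP : HasDerivAt P (s * (γ * (u + m) ^ (γ - 1))) u := by
      simpa using (((hasDerivAt_id u).add_const m).rpow_const (p := γ) (Or.inl hum.ne')).const_mul s
    refine ((hP.const_add 1).mul hP.neg.exp).neg.congr_deriv ?_
    simp only [P, Pi.neg_apply, show 2 * γ - 1 = γ + (γ - 1) by ring, rpow_add hum]
    ring
  have hcont : ContinuousWithinAt (fun u => -((1 + P u) * exp (-P u))) (Ici 0) 0 := by
    have : ContinuousAt P 0 :=
      (continuousAt_id.add continuousAt_const).rpow_const (Or.inr hγ.le) |>.const_mul s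
    exact (((this.const_add 1).mul (this.neg.rexp)).neg).continuousWithinAt
  have hlim : Tendsto (fun u => -((1 + P u) * exp (-P u))) atTop (𝓝 0) := by
    have hP : Tendsto P atTop atTop :=
      ((tendsto_rpow_atTop hγ).comp
        (tendsto_atTop_add_const_right _ m tendsto_id)).const_mul_atTop hs
    have h : Tendsto (fun p => (1 + p) * exp (-p)) atTop (𝓝 0) := by
      simpa [add_mul] using tendsto_exp_neg_atTop_nhds_zero.add
        (by simpa using tendsto_pow_mul_exp_neg_atTop_nhds_zero 1)
    simpa using (h.comp hP).neg
  have hnonneg : ∀ u ∈ Ioi (0 : ℝ), 0 ≤ s * s * γ * (u + m) ^ (2 * γ - 1) * exp (-P u) :=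
    fun u (hu : 0 < u) => by
      have : 0 < u + m := by linarith
      positivity
  rw [integral_Ioi_of_hasDerivAt_of_nonneg hcont hderiv hnonneg hlim]
  simp [P]

theorem sq_rpow_div_two {r : ℝ} (hr : 0 ≤ r) (δ : ℝ) : (r ^ 2) ^ (δ / 2) = r ^ δ := by
  rw [← rpow_natCast, ← rpow_mul hr]
  ring_nf

theorem genCauchy_zero {δ : ℝ} (hδ : δ ≠ 0) (lam : ℝ) : genCauchy δ lam 0 = 1 := by
  simp [genCauchy, zero_rpow hδ]

theorem continuousOn_one_add_rpow {δ : ℝ} (hδ : 0 < δ) :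
    ContinuousOn (fun r : ℝ => 1 + r ^ δ) (Ici 0) :=
  (continuousOn_id.rpow_const fun _ _ => Or.inr hδ.le).const_add 1

theorem continuousOn_genCauchy {δ : ℝ} (hδ : 0 < δ) (lam : ℝ) :
    ContinuousOn (genCauchy δ lam) (Ici 0) :=
  (continuousOn_one_add_rpow hδ).rpow_const fun r (hr : 0 ≤ r) => Or.inl (by positivity)

theorem ContinuousOn.zastavnyi {φ : ℝ → ℝ} (hφ : ContinuousOn φ (Ici 0)) (ε : ℝ) {β₁ β₂ : ℝ}
    (hβ₁ : 0 ≤ β₁) (hβ₂ : 0 ≤ β₂) : ContinuousOn (zastavnyi ε β₁ β₂ φ) (Ici 0) := by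
  have hcomp : ∀ {β : ℝ}, 0 ≤ β → ContinuousOn (fun t => φ (t / β)) (Ici 0) := fun hβ =>
    hφ.comp (continuousOn_id.div_const _) fun t (ht : 0 ≤ t) => div_nonneg ht hβ
  exact ((continuousOn_const.mul (hcomp hβ₂)).sub (continuousOn_const.mul (hcomp hβ₁))).div_const _

theorem zastavnyi_zero {φ : ℝ → ℝ} (hφ : φ 0 = 1) {ε β₁ β₂ : ℝ} (hβ : β₁ ^ ε ≠ β₂ ^ ε) :
    zastavnyi ε β₁ β₂ φ 0 = 1 := by
  simp [zastavnyi, hφ, sub_ne_zero.2 hβ.symm]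

/-- `ε C(r) - r C'(r)` for `C = genCauchy δ lam`. -/
def cauchyScaleDeriv (δ lam ε r : ℝ) : ℝ :=
  ε * genCauchy δ lam r + lam * r ^ δ * (1 + r ^ δ) ^ (-(lam / δ) - 1)

theorem continuousOn_cauchyScaleDeriv {δ : ℝ} (hδ : 0 < δ) (lam ε : ℝ) :
    ContinuousOn (cauchyScaleDeriv δ lam ε) (Ici 0) :=
  (continuousOn_const.mul (continuousOn_genCauchy hδ lam)).add
    ((continuousOn_const.mul (continuousOn_id.rpow_const fun _ _ => Or.inr hδ.le)).mul
      ((continuousOn_one_add_rpow hδ).rpow_const fun r (hr : 0 ≤ r) => Or.inl (by positivity)))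

theorem hasDerivAt_rpow_mul_genCauchy_div {δ lam ε t b : ℝ} (hδ : δ ≠ 0) (ht : 0 ≤ t)
    (hb : 0 < b) :
    HasDerivAt (fun b => b ^ ε * genCauchy δ lam (t / b))
      (b ^ (ε - 1) * cauchyScaleDeriv δ lam ε (t / b)) b := by
  have hdiv : ∀ {b : ℝ}, 0 < b → (t / b) ^ δ = t ^ δ * b ^ (-δ) := fun hb => by
    rw [div_rpow ht hb.le, rpow_neg hb.le, div_eq_mul_inv]
  have hX : 0 < 1 + t ^ δ * b ^ (-δ) := by positivity
  have hrpow := (((hasDerivAt_rpow_const (p := -δ) (Or.inl hb.ne')).const_mul (t ^ δ)).const_add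
    1).rpow_const (p := -(lam / δ)) (Or.inl hX.ne')
  refine (((hasDerivAt_rpow_const (p := ε) (Or.inl hb.ne')).mul hrpow).congr_of_eventuallyEq
    (eventually_gt_nhds hb |>.mono fun b' hb' => by
      simp only [genCauchy, hdiv hb', Pi.mul_apply])).congr_deriv ?_
  simp only [cauchyScaleDeriv, genCauchy, hdiv hb]
  rw [rpow_sub_one hb.ne', rpow_sub_one hb.ne', rpow_sub_one hX.ne']
  field_simp

theorem cauchyScaleDeriv_eq_integral {δ lam ε r : ℝ} (hδ : 0 < δ) (hlam : 0 < lam)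
    (hr : 0 ≤ r) :
    cauchyScaleDeriv δ lam ε r = (Gamma (lam / δ))⁻¹ * ∫ s in Ioi 0, s ^ (lam / δ - 1) *
      exp (-s) * ((ε - δ) * exp (-(s * r ^ δ)) + δ * ((1 + s * r ^ δ) * exp (-(s * r ^ δ)))) := by
  set α := lam / δ
  have hα : 0 < α := div_pos hlam hδ
  have hc : 0 < 1 + r ^ δ := by positivity
  have hsplit : ∀ s ∈ Ioi (0 : ℝ), s ^ (α - 1) * exp (-s) *
      ((ε - δ) * exp (-(s * r ^ δ)) + δ * ((1 + s * r ^ δ) * exp (-(s * r ^ δ)))) =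
      ε * (s ^ (α - 1) * exp (-((1 + r ^ δ) * s))) +
        δ * r ^ δ * (s ^ ((α + 1) - 1) * exp (-((1 + r ^ δ) * s))) := fun s (hs : 0 < s) => by
    rw [add_sub_cancel_right, rpow_sub_one hs.ne',
      show -((1 + r ^ δ) * s) = -s + -(s * r ^ δ) by ring, exp_add]
    field_simp
    ring
  rw [setIntegral_congr_fun measurableSet_Ioi hsplit, integral_add, integral_const_mul,
    integral_const_mul, integral_rpow_mul_exp_neg_mul_Ioi hα hc,
    integral_rpow_mul_exp_neg_mul_Ioi (by linarith) hc,
    Gamma_add_one hα.ne']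
  · have hlam' : lam = δ * α := (mul_div_cancel₀ lam hδ.ne').symm
    rw [cauchyScaleDeriv, genCauchy, one_div, inv_rpow hc.le, inv_rpow hc.le, ← rpow_neg hc.le,
      ← rpow_neg hc.le, neg_add', hlam']
    field_simp [(Gamma_pos_of_pos hα).ne']
  · exact (integrableOn_rpow_sub_one_mul_exp_neg_mul hα hc).const_mul _
  · exact (integrableOn_rpow_sub_one_mul_exp_neg_mul (by linarith) hc).const_mul _

theorem continuousOn_rpow_mul_cauchyScaleDeriv_div {δ : ℝ} (hδ : 0 < δ) (lam ε : ℝ) {t : ℝ}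
    (ht : 0 ≤ t) :
    ContinuousOn (fun b => b ^ (ε - 1) * cauchyScaleDeriv δ lam ε (t / b)) (Ioi 0) :=
  (continuousOn_id.rpow_const fun b (hb : 0 < b) => Or.inl hb.ne').mul
    ((continuousOn_cauchyScaleDeriv hδ lam ε).comp (continuousOn_const.div continuousOn_id
      fun b (hb : 0 < b) => hb.ne') fun b (hb : 0 < b) => div_nonneg ht hb.le)

theorem zastavnyi_genCauchy_eq_integral {δ lam ε β₁ β₂ t : ℝ} (hδ : 0 < δ) (hβ₁ : 0 < β₁)
    (hβ : β₁ ≤ β₂) (ht : 0 ≤ t) :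
    zastavnyi ε β₁ β₂ (genCauchy δ lam) t =
      (β₂ ^ ε - β₁ ^ ε)⁻¹ * ∫ b in β₁..β₂, b ^ (ε - 1) * cauchyScaleDeriv δ lam ε (t / b) := by
  have hpos : ∀ b ∈ uIcc β₁ β₂, 0 < b := fun b hb => hβ₁.trans_le (uIcc_of_le hβ ▸ hb).1
  rw [intervalIntegral.integral_eq_sub_of_hasDerivAt
    (fun b hb => hasDerivAt_rpow_mul_genCauchy_div hδ.ne' ht (hpos b hb))
    ((continuousOn_rpow_mul_cauchyScaleDeriv_div hδ lam ε ht).mono hpos).intervalIntegrable,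
    zastavnyi, div_eq_inv_mul]

section InnerProductSpace

variable {F : Type*} [SeminormedAddCommGroup F] [InnerProductSpace ℝ F]

open scoped RealInnerProductSpace in
theorem radialCondNegDef_sq : RadialCondNegDef F fun r => r ^ 2 := by
  intro n x a ha
  have hinner : ∑ i, ∑ j, a i * a j * ⟪x i, x j⟫ = ‖∑ i, a i • x i‖ ^ 2 := by
    simp only [← real_inner_self_eq_norm_sq, sum_inner, inner_sum, real_inner_smul_left,
      real_inner_smul_right, mul_assoc]
    exact Finset.sum_congr rfl fun i _ => Finset.sum_congr rfl fun j _ => by rw [real_inner_comm]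
  have hsq : ∑ i, ∑ j, a i * a j * ‖x i - x j‖ ^ 2 = -2 * ‖∑ i, a i • x i‖ ^ 2 := by
    calc ∑ i, ∑ j, a i * a j * ‖x i - x j‖ ^ 2
        = (∑ i, a i * ‖x i‖ ^ 2) * ∑ j, a j + (∑ i, a i) * ∑ j, a j * ‖x j‖ ^ 2
          - 2 * ∑ i, ∑ j, a i * a j * ⟪x i, x j⟫ := by
          rw [Finset.sum_mul_sum, Finset.sum_mul_sum, Finset.mul_sum, ← Finset.sum_add_distrib,
            ← Finset.sum_sub_distrib]
          refine Finset.sum_congr rfl fun i _ => ?_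
          rw [Finset.mul_sum, ← Finset.sum_add_distrib, ← Finset.sum_sub_distrib]
          refine Finset.sum_congr rfl fun j _ => ?_
          rw [norm_sub_sq_real]
          ring
      _ = -2 * ‖∑ i, a i • x i‖ ^ 2 := by rw [ha, hinner]; ring
  rw [hsq]
  nlinarith [sq_nonneg ‖∑ i, a i • x i‖]

theorem radialPosDef_exp_neg_mul_sq {v : ℝ} (hv : 0 ≤ v) :
    RadialPosDef F fun r => exp (-(v * r ^ 2)) :=
  (radialCondNegDef_sq.const_mul hv).exp_neg

theorem radialPosDef_rpow_neg_add_sq {u q : ℝ} (hu : 0 < u) (hq : 0 < q) :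
    RadialPosDef F fun r => (u + r ^ 2) ^ (-q) := by
  have hint : ∀ r, Integrable (fun t => t ^ (q - 1) * exp (-((u + r ^ 2) * t)))
      (volume.restrict (Ioi 0)) := fun r =>
    integrableOn_rpow_sub_one_mul_exp_neg_mul hq (by positivity)
  refine ((RadialPosDef.integral ?_ fun r _ => hint r).const_mul
    (inv_nonneg.2 (Gamma_pos_of_pos hq).le)).congr fun r _ =>
      (rpow_neg_eq_integral hq (by positivity)).symm
  refine ae_restrict_of_forall_mem measurableSet_Ioi fun t (ht : 0 < t) => ?_
  refine ((radialPosDef_exp_neg_mul_sq ht.le).const_mul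
    (c := t ^ (q - 1) * exp (-(u * t))) (by positivity)).congr fun r _ => ?_
  rw [mul_assoc, ← exp_add]
  ring_nf

theorem radialCondNegDef_rpow_add_sq {γ u : ℝ} (hγ : γ ∈ Ioo 0 1) (hu : 0 ≤ u) :
    RadialCondNegDef F fun r => (u + r ^ 2) ^ γ := by
  obtain ⟨μ, hμ⟩ := exists_measure_rpow_eq_integral_rpowIntegrand₀₁ hγ
  have hμ' : ∀ r : ℝ, _ := fun r => hμ (u + r ^ 2) (by positivity : (0 : ℝ) ≤ u + r ^ 2)
  refine (RadialCondNegDef.integral ?_ fun r _ => (hμ' r).1).congr fun r _ => (hμ' r).2.symm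
  refine ae_restrict_of_forall_mem measurableSet_Ioi fun t (ht : 0 < t) => ?_
  refine (((radialPosDef_rpow_neg_add_sq (u := t + u) (by positivity) one_pos).const_mul
    (c := t ^ γ) (by positivity)).radialCondNegDef_const_sub (t ^ γ * t⁻¹)).congr fun r _ => ?_
  rw [rpowIntegrand₀₁, rpow_neg_one, add_assoc]
  ring

theorem radialPosDef_exp_neg_mul_rpow_add_sq {γ u s : ℝ} (hγ : γ ∈ Ioo 0 1) (hu : 0 ≤ u)
    (hs : 0 ≤ s) : RadialPosDef F fun r => exp (-(s * (u + r ^ 2) ^ γ)) :=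
  ((radialCondNegDef_rpow_add_sq hγ hu).const_mul hs).exp_neg

theorem radialPosDef_exp_neg_mul_rpow {δ s : ℝ} (hδ : δ ∈ Ioo 0 2) (hs : 0 ≤ s) :
    RadialPosDef F fun r => exp (-(s * r ^ δ)) :=
  (radialPosDef_exp_neg_mul_rpow_add_sq (u := 0) ⟨half_pos hδ.1, by linarith [hδ.2]⟩ le_rfl
    hs).congr fun r hr => by rw [zero_add, sq_rpow_div_two hr]

theorem radialPosDef_one_add_mul_rpow_mul_exp_neg {δ s : ℝ} (hδ : δ ∈ Ioo 0 1) (hs : 0 < s) :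
    RadialPosDef F fun r => (1 + s * r ^ δ) * exp (-(s * r ^ δ)) := by
  have hγ : δ / 2 ∈ Ioo 0 1 := ⟨half_pos hδ.1, by linarith [hδ.2]⟩
  have hint : ∀ r : ℝ, ∫ u in Ioi 0, s * s * (δ / 2) * (u + r ^ 2) ^ (2 * (δ / 2) - 1) *
      exp (-(s * (u + r ^ 2) ^ (δ / 2))) =
        (1 + s * (r ^ 2) ^ (δ / 2)) * exp (-(s * (r ^ 2) ^ (δ / 2))) :=
    fun r => integral_rpow_mul_exp_neg_mul_rpow_add hγ.1 hs (sq_nonneg r)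
  have key : RadialPosDef F fun r => ∫ u in Ioi 0,
      s * s * (δ / 2) * (u + r ^ 2) ^ (2 * (δ / 2) - 1) * exp (-(s * (u + r ^ 2) ^ (δ / 2))) := by
    refine RadialPosDef.integral
      (ae_restrict_of_forall_mem measurableSet_Ioi fun u (hu : 0 < u) => ?_)
      fun r _ => .of_integral_ne_zero (by rw [hint]; positivity)
    refine (((radialPosDef_rpow_neg_add_sq hu (q := 1 - δ) (by linarith [hδ.2])).mul
      (radialPosDef_exp_neg_mul_rpow_add_sq hγ hu.le hs.le)).const_mul
        (c := s * s * (δ / 2)) (by have := hγ.1; positivity)).congr fun r _ => ?_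
    rw [show 2 * (δ / 2) - 1 = -(1 - δ) by ring]
    ring
  exact key.congr fun r hr => by rw [hint, sq_rpow_div_two hr]

theorem radialPosDef_cauchyScaleDeriv {δ lam ε : ℝ} (hδ : δ ∈ Ioo 0 1) (hlam : 0 < lam)
    (hε : δ ≤ ε) :
    RadialPosDef F (cauchyScaleDeriv δ lam ε) := by
  have hα : 0 < lam / δ := div_pos hlam hδ.1
  have hε0 : 0 < ε := hδ.1.trans_le hε
  have key : RadialPosDef F fun r => ∫ s in Ioi 0, s ^ (lam / δ - 1) * exp (-s) *
      ((ε - δ) * exp (-(s * r ^ δ)) + δ * ((1 + s * r ^ δ) * exp (-(s * r ^ δ)))) := by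
    refine RadialPosDef.integral
      (ae_restrict_of_forall_mem measurableSet_Ioi fun s (hs : 0 < s) => ?_)
      fun r hr => .of_integral_ne_zero fun h => ?_
    · exact (((radialPosDef_exp_neg_mul_rpow ⟨hδ.1, by linarith [hδ.2]⟩ hs.le).const_mul
        (sub_nonneg.2 hε)).add ((radialPosDef_one_add_mul_rpow_mul_exp_neg hδ hs).const_mul
          hδ.1.le)).const_mul (by positivity)
    · have hpos : 0 < cauchyScaleDeriv δ lam ε r := by
        unfold cauchyScaleDeriv genCauchy
        positivity
      rw [cauchyScaleDeriv_eq_integral hδ.1 hlam hr, h, mul_zero] at hpos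
      exact hpos.false
  exact (key.const_mul (inv_nonneg.2 (Gamma_pos_of_pos hα).le)).congr fun r hr =>
    (cauchyScaleDeriv_eq_integral hδ.1 hlam hr).symm

theorem radialPosDef_zastavnyi_genCauchy {δ lam ε β₁ β₂ : ℝ} (hδ : δ ∈ Ioo 0 1)
    (hlam : 0 < lam) (hε : δ ≤ ε) (hβ₁ : 0 < β₁) (hβ : β₁ ≤ β₂) :
    RadialPosDef F (zastavnyi ε β₁ β₂ (genCauchy δ lam)) := by
  have hpos : ∀ b ∈ Icc β₁ β₂, 0 < b := fun b hb => hβ₁.trans_le hb.1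
  have hden : 0 ≤ β₂ ^ ε - β₁ ^ ε :=
    sub_nonneg.2 (rpow_le_rpow hβ₁.le hβ (hδ.1.trans_le hε).le)
  have key : RadialPosDef F fun t =>
      ∫ b in Ioc β₁ β₂, b ^ (ε - 1) * cauchyScaleDeriv δ lam ε (t / b) := by
    refine RadialPosDef.integral
      (ae_restrict_of_forall_mem measurableSet_Ioc fun b hb => ?_) fun t ht => ?_
    · have hb := hpos b (Ioc_subset_Icc_self hb)
      exact (((radialPosDef_cauchyScaleDeriv hδ hlam hε).comp_mul_left
        (inv_nonneg.2 hb.le)).const_mul (rpow_nonneg hb.le _)).congr fun t _ => by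
          rw [inv_mul_eq_div]
    · exact ((continuousOn_rpow_mul_cauchyScaleDeriv_div hδ.1 lam ε ht).mono
        hpos).integrableOn_Icc.mono_set Ioc_subset_Icc_self
  exact (key.const_mul (inv_nonneg.2 hden)).congr fun t ht => by
    rw [zastavnyi_genCauchy_eq_integral hδ.1 hβ₁ hβ ht, intervalIntegral.integral_of_le hβ]

end InnerProductSpace

/-- Theorem 3.3(1): for `0 < δ < 1` and `ε ≥ δ`, the Zastavnyi operator applied
to the Generalized Cauchy function belongs to `Φ_∞`. -/
theorem genCauchy_zastavnyi_pos (δ lam ε β₁ β₂ : ℝ) (hδ0 : 0 < δ) (hδ1 : δ < 1)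
    (hlam : 0 < lam) (hβ₁ : 0 < β₁) (hβ : β₁ < β₂) (hε0 : 0 < ε) (hε : δ ≤ ε) :
    ∀ d : ℕ, 0 < d → MemPhi d (zastavnyi ε β₁ β₂ (genCauchy δ lam)) := fun _ _ =>
  ⟨(continuousOn_genCauchy hδ0 lam).zastavnyi ε hβ₁.le (hβ₁.trans hβ).le,
    zastavnyi_zero (genCauchy_zero hδ0.ne' lam) (rpow_lt_rpow hβ₁.le hβ hε0).ne,
    radialPosDef_zastavnyi_genCauchy ⟨hδ0, hδ1⟩ hlam hε hβ₁ hβ.le⟩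
end
end

section
/- Let ν ∈ ℝ and let K_ν be the modified Bessel function of the second kind of order ν. Then z K_ν′(z)/K_ν(z) tends to −∞ as z → +∞, where K_ν′ denotes the derivative of K_ν. -/
open MeasureTheory Real Filter

noncomputable section

open Set

/-!
Differentiating under the integral sign gives
`K_ν'(z) = -∫₀^∞ e^{-z cosh u} cosh u cosh(νu) du`, and since `cosh u ≥ 1` this is at most
`-K_ν(z)`; hence `z K_ν'(z) / K_ν(z) ≤ -z`. All integrals involved, and the domination
needed to differentiate under the integral sign, are controlled by a Gaussian since
`cosh u ≥ 1 + u² / 2`.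
-/

theorem Real.one_add_sq_div_two_le_cosh (u : ℝ) : 1 + u ^ 2 / 2 ≤ cosh u := by
  have hsinh : (u / 2) ^ 2 ≤ sinh (u / 2) ^ 2 := by
    rw [← sq_abs (sinh _), abs_sinh, ← sq_abs (u / 2)]
    gcongr
    exact self_le_sinh_iff.2 (abs_nonneg _)
  have hcosh : cosh u = 1 + 2 * sinh (u / 2) ^ 2 := by
    have := cosh_two_mul (u / 2)
    rw [mul_div_cancel₀ u two_ne_zero, cosh_sq] at this
    linarith
  linarith

theorem Real.cosh_le_exp_abs (x : ℝ) : cosh x ≤ exp |x| := by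
  rw [← cosh_abs, cosh_eq]
  have : exp (-|x|) ≤ exp |x| := exp_le_exp.2 (by linarith [abs_nonneg x])
  linarith

theorem Real.integrable_exp_mul_sub_mul_cosh {a : ℝ} (ha : 0 < a) (b : ℝ) :
    Integrable fun u => exp (b * u - a * cosh u) := by
  have hgauss : Integrable fun u : ℝ =>
      exp (b ^ 2 / (2 * a) - a) * exp (-(a / 2) * (u - b / a) ^ 2) :=
    ((integrable_exp_neg_mul_sq (half_pos ha)).comp_sub_right (b / a)).const_mul _
  refine hgauss.mono' (by fun_prop : Continuous _).aestronglyMeasurable (ae_of_all _ fun u => ?_)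
  have hsq : b ^ 2 / (2 * a) - a + -(a / 2) * (u - b / a) ^ 2 = b * u - a * (1 + u ^ 2 / 2) := by
    field_simp
    ring
  rw [norm_of_nonneg (exp_pos _).le, ← exp_add, hsq]
  gcongr
  exact one_add_sq_div_two_le_cosh u

def besselKIntegrand (ν t u : ℝ) : ℝ :=
  exp (-t * cosh u) * cosh (ν * u)

section besselKIntegrand

variable (ν : ℝ)

theorem besselKIntegrand_pos (t u : ℝ) : 0 < besselKIntegrand ν t u := by
  unfold besselKIntegrand
  positivity

theorem antitone_besselKIntegrand (u : ℝ) : Antitone fun t => besselKIntegrand ν t u :=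
  fun s t hst =>
    mul_le_mul_of_nonneg_right (exp_le_exp.2 (by nlinarith [one_le_cosh u])) (cosh_pos _).le

theorem hasDerivAt_besselKIntegrand (t u : ℝ) :
    HasDerivAt (fun t => besselKIntegrand ν t u) (-(cosh u * besselKIntegrand ν t u)) t := by
  have hexp : HasDerivAt (fun t => exp (-t * cosh u)) (exp (-t * cosh u) * -cosh u) t := by
    simpa using ((hasDerivAt_neg t).mul_const (cosh u)).exp
  exact (hexp.mul_const (cosh (ν * u))).congr_deriv (by unfold besselKIntegrand; ring)

theorem continuous_besselKIntegrand (t : ℝ) : Continuous (besselKIntegrand ν t) := by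
  unfold besselKIntegrand
  fun_prop

theorem cosh_mul_besselKIntegrand_le (t : ℝ) {u : ℝ} (hu : 0 ≤ u) :
    cosh u * besselKIntegrand ν t u ≤ exp ((1 + |ν|) * u - t * cosh u) := by
  have hcosh : cosh u ≤ exp u := by simpa [abs_of_nonneg hu] using cosh_le_exp_abs u
  have hcoshν : cosh (ν * u) ≤ exp (|ν| * u) := by
    simpa [abs_mul, abs_of_nonneg hu] using cosh_le_exp_abs (ν * u)
  calc cosh u * besselKIntegrand ν t u ≤ exp u * (exp (-t * cosh u) * exp (|ν| * u)) := by
        unfold besselKIntegrand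
        gcongr
    _ = exp ((1 + |ν|) * u - t * cosh u) := by
        rw [← exp_add, ← exp_add]
        ring_nf

variable {ν}

theorem integrableOn_cosh_mul_besselKIntegrand {t : ℝ} (ht : 0 < t) :
    IntegrableOn (fun u => cosh u * besselKIntegrand ν t u) (Ioi 0) :=
  (integrable_exp_mul_sub_mul_cosh ht (1 + |ν|)).integrableOn.mono'
    (continuous_cosh.mul (continuous_besselKIntegrand ν t)).aestronglyMeasurable
    (ae_restrict_of_forall_mem measurableSet_Ioi fun u hu => by
      rw [norm_of_nonneg (mul_pos (cosh_pos u) (besselKIntegrand_pos ν t u)).le]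
      exact cosh_mul_besselKIntegrand_le ν t hu.le)

theorem integrableOn_besselKIntegrand {t : ℝ} (ht : 0 < t) :
    IntegrableOn (besselKIntegrand ν t) (Ioi 0) :=
  (integrableOn_cosh_mul_besselKIntegrand ht).mono'
    (continuous_besselKIntegrand ν t).aestronglyMeasurable
    (ae_of_all _ fun u => by
      rw [norm_of_nonneg (besselKIntegrand_pos ν t u).le]
      exact le_mul_of_one_le_left (besselKIntegrand_pos ν t u).le (one_le_cosh u))

end besselKIntegrand

section besselK

variable {ν z : ℝ}

theorem besselK_pos (hz : 0 < z) : 0 < besselK ν z := by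
  have hsupport : Function.support (besselKIntegrand ν z) = univ :=
    Function.support_eq_univ fun u => (besselKIntegrand_pos ν z u).ne'
  change 0 < ∫ u in Ioi 0, besselKIntegrand ν z u
  rw [integral_pos_iff_support_of_nonneg (fun u => (besselKIntegrand_pos ν z u).le)
    (integrableOn_besselKIntegrand hz)]
  simp [hsupport]

theorem hasDerivAt_besselK (hz : 0 < z) :
    HasDerivAt (besselK ν) (-∫ u in Ioi 0, cosh u * besselKIntegrand ν z u) z := by
  rw [← integral_neg]
  refine (hasDerivAt_integral_of_dominated_loc_of_deriv_le (Metric.ball_mem_nhds z (half_pos hz))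
    (Eventually.of_forall fun t => (continuous_besselKIntegrand ν t).aestronglyMeasurable)
    (integrableOn_besselKIntegrand hz)
    ((continuous_cosh.mul (continuous_besselKIntegrand ν z)).neg.aestronglyMeasurable)
    (bound := fun u => cosh u * besselKIntegrand ν (z / 2) u) ?_
    (integrableOn_cosh_mul_besselKIntegrand (half_pos hz))
    (ae_of_all _ fun u t _ => hasDerivAt_besselKIntegrand ν t u)).2
  refine ae_of_all _ fun u t ht => ?_
  have hzt : z / 2 ≤ t := by
    rw [Metric.mem_ball, dist_eq, abs_lt] at ht
    linarith
  rw [norm_neg, norm_of_nonneg (mul_pos (cosh_pos u) (besselKIntegrand_pos ν t u)).le]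
  gcongr
  exact antitone_besselKIntegrand ν u hzt

theorem deriv_besselK_le_neg_besselK (hz : 0 < z) : deriv (besselK ν) z ≤ -besselK ν z := by
  rw [(hasDerivAt_besselK hz).deriv, neg_le_neg_iff]
  exact setIntegral_mono (integrableOn_besselKIntegrand hz)
    (integrableOn_cosh_mul_besselKIntegrand hz)
    fun u => le_mul_of_one_le_left (besselKIntegrand_pos ν z u).le (one_le_cosh u)

end besselK

/-- Lemma 3.1(1): `z K_ν'(z)/K_ν(z) → -∞` as `z → +∞`. -/
theorem besselK_logDeriv_tendsto_atTop (ν : ℝ) :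
    Tendsto (fun z : ℝ => z * deriv (besselK ν) z / besselK ν z) atTop atBot := by
  refine tendsto_atBot_mono' _ ?_ tendsto_neg_atTop_atBot
  filter_upwards [eventually_gt_atTop 0] with z hz
  have hK := besselK_pos (ν := ν) hz
  calc z * deriv (besselK ν) z / besselK ν z ≤ z * -besselK ν z / besselK ν z := by
        gcongr
        exact deriv_besselK_le_neg_besselK hz
    _ = -z := by field_simp
end
end
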